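/- Volume formula for a full-dimensional zonotope: for vectors v₁,…,vₘ ∈ ℝ^n with m ≥ n, the n-dimensional Lebesgue measure of Z(v₁,…,vₘ) equals the sum over all n-element subsets S ⊆ {1,…,m} of |det(v_{i} : i ∈ S)|. -/

import Mathlib

open MeasureTheory Finset

def zonotope {n m : ℕ} (v : Fin m → (Fin n → ℝ)) : Set (Fin n → ℝ) :=
  {x | ∃ l : Fin m → ℝ, (∀ i, l i ∈ Set.Icc (0 : ℝ) 1) ∧ x = ∑ i, l i • v i}

/-- The absolute value of the determinant of the `n × n` matrix whose columns are the
vectors `v i` for `i ∈ S` (in increasing index order), where `S` has `n` elements. -/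
def absDetCols {n m : ℕ} (v : Fin m → (Fin n → ℝ)) (S : Finset (Fin m))
    (hS : S.card = n) : ℝ :=
  |(Matrix.of fun (r : Fin n) (c : Fin n) => v (S.orderIsoOfFin hS c) r).det|

/-!
Both sides of the formula scale by `|det g|` when every generator is replaced by its image under
a linear map `g`, and neither changes when a zero generator is appended. This allows an induction
on the number of generators in which the last generator is the last standard basis vector `e`.
Then `Z(u, e) = Z(u) + [0, e]`. By Fubini over the last coordinate, each vertical line meets
`Z(u)` in a segment (or not at all), and adding `[0, e]` lengthens that segment by exactly `1`, so
`vol Z(u, e) = vol Z(u) + vol (π Z(u))`, where `π` forgets the last coordinate. On the side of the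
determinants, the `n`-subsets that avoid the last index give the sum for `u`; for the others,
Laplace expansion along the row `e` leaves the `(n - 1)`-minors of `π ∘ u`.
-/

open scoped Pointwise ENNReal Matrix

lemma Real.volume_add_Icc_zero_one {K : Set ℝ} (hK : IsCompact K) (hconv : Convex ℝ K)
    (hne : K.Nonempty) : volume (K + Set.Icc 0 1) = volume K + 1 := by
  have hab : sInf K ≤ sSup K := csInf_le_csSup hne hK.bddBelow hK.bddAbove
  rw [eq_Icc_of_connected_compact ⟨hne, hconv.isPreconnected⟩ hK,
    Set.Icc_add_Icc hab zero_le_one, Real.volume_Icc, Real.volume_Icc, ← ENNReal.ofReal_one,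
    ← ENNReal.ofReal_add (sub_nonneg.mpr hab) zero_le_one]
  ring_nf

lemma preimage_prodMk_add_prod_zero {E F : Type*} [Add E] [AddZeroClass F] (C : Set (E × F))
    (s : Set E) (y : F) :
    (fun x => (x, y)) ⁻¹' (C + s ×ˢ {0}) = (fun x => (x, y)) ⁻¹' C + s := by
  ext x
  simp only [Set.mem_preimage, Set.mem_add, Set.mem_prod, Set.mem_singleton_iff, Prod.exists]
  constructor
  · rintro ⟨a, b, hab, t, z, ⟨ht, rfl⟩, h⟩
    simp only [Prod.mk_add_mk, add_zero, Prod.mk.injEq] at h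
    obtain ⟨rfl, rfl⟩ := h
    exact ⟨a, hab, t, ht, rfl⟩
  · rintro ⟨a, ha, t, ht, rfl⟩
    exact ⟨a, y, ha, t, 0, ⟨ht, rfl⟩, by simp⟩

lemma Convex.preimage_prodMk {𝕜 E F : Type*} [Semiring 𝕜] [PartialOrder 𝕜] [AddCommMonoid E]
    [AddCommMonoid F] [Module 𝕜 E] [Module 𝕜 F] {C : Set (E × F)} (hC : Convex 𝕜 C) (y : F) :
    Convex 𝕜 ((fun x => (x, y)) ⁻¹' C) := by
  intro s hs t ht a b ha hb hab
  show (a • s + b • t, y) ∈ C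
  convert hC hs ht ha hb hab using 1
  ext <;> simp [← add_smul, hab]

lemma volume_prod_add_Icc_prod_zero {F : Type*} [NormedAddCommGroup F] [NormedSpace ℝ F]
    [MeasurableSpace F] [OpensMeasurableSpace F] (ν : Measure F) [SFinite ν]
    {C : Set (ℝ × F)} (hC : IsCompact C) (hconv : Convex ℝ C) :
    (volume.prod ν) (C + Set.Icc 0 1 ×ˢ {0}) = (volume.prod ν) C + ν (Prod.snd '' C) := by
  have hCI : IsCompact (C + Set.Icc (0 : ℝ) 1 ×ˢ {0}) :=
    hC.add (isCompact_Icc.prod isCompact_singleton)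
  have hslice (y : F) : volume ((fun t => (t, y)) ⁻¹' (C + Set.Icc (0 : ℝ) 1 ×ˢ {0})) =
      volume ((fun t => (t, y)) ⁻¹' C) + (Prod.snd '' C).indicator 1 y := by
    rw [preimage_prodMk_add_prod_zero]
    by_cases hy : y ∈ Prod.snd '' C
    · have hne : ((fun t => (t, y)) ⁻¹' C).Nonempty := by
        obtain ⟨⟨t, y⟩, ht, rfl⟩ := hy
        exact ⟨t, ht⟩
      have hcpt : IsCompact ((fun t => (t, y)) ⁻¹' C) :=
        (hC.image continuous_fst).of_isClosed_subset (hC.isClosed.preimage (by fun_prop))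
          fun t ht => ⟨_, ht, rfl⟩
      rw [Real.volume_add_Icc_zero_one hcpt (hconv.preimage_prodMk y) hne,
        Set.indicator_of_mem hy, Pi.one_apply]
    · have hempty : (fun t => (t, y)) ⁻¹' C = ∅ :=
        Set.eq_empty_of_forall_notMem fun t ht => hy ⟨(t, y), ht, rfl⟩
      simp [hempty, Set.indicator_of_notMem hy]
  rw [Measure.prod_apply_symm hCI.measurableSet, Measure.prod_apply_symm hC.measurableSet,
    lintegral_congr hslice, lintegral_add_left (measurable_measure_prodMk_right hC.measurableSet),
    lintegral_indicator_one (hC.image continuous_snd).measurableSet]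

lemma segment_zero_prodMk_one_zero (F : Type*) [AddCommGroup F] [Module ℝ F] :
    segment ℝ (0 : ℝ × F) (1, 0) = Set.Icc 0 1 ×ˢ {0} := by
  rw [Set.prod_singleton, ← segment_eq_Icc zero_le_one, Prod.image_mk_segment_left]
  rfl

lemma volume_add_segment_single_last {k : ℕ} {Z : Set (Fin (k + 1) → ℝ)} (hZ : IsCompact Z)
    (hconv : Convex ℝ Z) :
    volume (Z + segment ℝ 0 (Pi.single (Fin.last k) 1)) = volume Z + volume (Fin.init '' Z) := by
  let L : (Fin (k + 1) → ℝ) →ₗ[ℝ] ℝ × (Fin k → ℝ) :=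
    (LinearMap.proj (Fin.last k)).prod (LinearMap.funLeft ℝ ℝ Fin.castSucc)
  let Φ := MeasurableEquiv.piFinSuccAbove (fun _ => ℝ) (Fin.last k)
  have hΦL : ⇑Φ = ⇑L := by
    ext x j <;> simp [Φ, L, Fin.init]
  have hvol (S : Set (Fin (k + 1) → ℝ)) : volume S = (volume.prod volume) (L '' S) := by
    have := (volume_preserving_piFinSuccAbove (fun _ => ℝ) (Fin.last k)).measure_preimage_equiv
      (Φ '' S)
    rw [Φ.preimage_image] at this
    rw [this, hΦL]
    rfl
  have hseg : L '' segment ℝ 0 (Pi.single (Fin.last k) 1) = Set.Icc 0 1 ×ˢ {0} := by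
    have hLe : L (Pi.single (Fin.last k) 1) = (1, 0) := by
      refine Prod.ext (by simp [L]) (funext fun j => ?_)
      simp [L, (Fin.castSucc_lt_last j).ne]
    rw [← segment_zero_prodMk_one_zero, ← hLe, ← map_zero L]
    exact image_segment ℝ L.toAffineMap _ _
  rw [hvol, hvol, Set.image_add, hseg,
    volume_prod_add_Icc_prod_zero _ (hZ.image L.continuous_of_finiteDimensional)
      (hconv.linear_image L), Set.image_image]
  rfl

lemma Finset.orderEmbOfFin_map {α β : Type*} [LinearOrder α] [LinearOrder β] {f : α ↪ β}
    (hf : StrictMono f) (S : Finset α) {k : ℕ} (h : (S.map f).card = k) (i : Fin k) :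
    (S.map f).orderEmbOfFin h i = f (S.orderEmbOfFin (by simpa using h) i) := by
  rw [← orderEmbOfFin_unique h (f := fun i => f (S.orderEmbOfFin _ i))
    (fun i => mem_map_of_mem _ (S.orderEmbOfFin_mem _ i))
    (hf.comp (S.orderEmbOfFin _).strictMono)]

lemma Fin.strictMono_snoc {α : Type*} [Preorder α] {k : ℕ} {g : Fin k → α} (hg : StrictMono g)
    {a : α} (ha : ∀ i, g i < a) : StrictMono (Fin.snoc (α := fun _ => α) g a) := by
  intro i j hij
  induction j using Fin.lastCases with
  | last =>
    induction i using Fin.lastCases with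
    | last => exact absurd hij (lt_irrefl _)
    | cast i => simpa using ha i
  | cast j =>
    induction i using Fin.lastCases with
    | last => exact absurd hij (Fin.castSucc_lt_last j).not_gt
    | cast i => simpa using hg (Fin.castSucc_lt_castSucc_iff.mp hij)

lemma Finset.orderEmbOfFin_insert_of_forall_lt {α : Type*} [LinearOrder α] {S : Finset α}
    {a : α} (ha : ∀ b ∈ S, b < a) {k : ℕ} (h : (insert a S).card = k + 1) (h' : S.card = k) :
    ⇑((insert a S).orderEmbOfFin h) = Fin.snoc (α := fun _ => α) (S.orderEmbOfFin h') a :=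
  (orderEmbOfFin_unique h
    (fun i => by induction i using Fin.lastCases <;> simp [S.orderEmbOfFin_mem])
    (Fin.strictMono_snoc (S.orderEmbOfFin h').strictMono
      fun i => ha _ (S.orderEmbOfFin_mem h' i))).symm

lemma Fin.sum_finset_succ {M : Type*} [AddCommMonoid M] {m : ℕ} (F : Finset (Fin (m + 1)) → M) :
    ∑ S, F S = ∑ S : Finset (Fin m), F (S.map Fin.castSuccEmb) +
      ∑ S : Finset (Fin m), F (insert (Fin.last m) (S.map Fin.castSuccEmb)) := by
  have hinj := (image_injective (Fin.castSuccEmb (n := m)).injective).injOn (s := Set.univ)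
  rw [← powerset_univ, Fin.univ_castSuccEmb, cons_eq_insert, sum_powerset_insert (by simp),
    map_eq_image, powerset_image, sum_image (by simpa using hinj),
    sum_image (by simpa using hinj), powerset_univ]
  simp only [map_eq_image]

lemma Matrix.of_comp_linearMap {ι : Type*} {n : ℕ} (g : (Fin n → ℝ) →ₗ[ℝ] (Fin n → ℝ))
    (w : ι → Fin n → ℝ) :
    Matrix.of (fun i => g (w i)) = Matrix.of w * (LinearMap.toMatrix' g)ᵀ := by
  ext i j
  rw [Matrix.of_apply, ← LinearMap.toMatrix'_mulVec, Matrix.mul_apply, Matrix.mulVec, dotProduct]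
  simp [mul_comm]

lemma Matrix.det_of_snoc_single_last {R : Type*} [CommRing R] {k : ℕ}
    (A : Fin k → Fin (k + 1) → R) :
    (Matrix.of (Fin.snoc A (Pi.single (Fin.last k) 1))).det =
      (Matrix.of fun i => Fin.init (A i)).det := by
  rw [Matrix.det_succ_row _ (Fin.last k), Fintype.sum_eq_single (Fin.last k)]
  · simp only [Fin.val_last, Even.add_self, Even.neg_pow, one_pow, Matrix.of_apply,
      Fin.snoc_last, Pi.single_eq_same, mul_one, Matrix.submatrix, Fin.succAbove_last,
      Fin.snoc_castSucc, one_mul]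
    rfl
  · intro j hj
    simp [hj]

section Zonotope

variable {m n : ℕ}

lemma zonotope_eq_image (v : Fin m → Fin n → ℝ) :
    zonotope v = Fintype.linearCombination ℝ v '' Set.Icc 0 1 := by
  ext x
  simp [zonotope, Fintype.linearCombination_apply, Pi.le_def, forall_and, eq_comm]

lemma isCompact_zonotope (v : Fin m → Fin n → ℝ) : IsCompact (zonotope v) := by
  rw [zonotope_eq_image]
  exact isCompact_Icc.image (LinearMap.continuous_of_finiteDimensional _)

lemma convex_zonotope (v : Fin m → Fin n → ℝ) : Convex ℝ (zonotope v) := by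
  rw [zonotope_eq_image]
  exact (convex_Icc _ _).linear_image _

lemma zonotope_fin_zero (v : Fin 0 → Fin n → ℝ) : zonotope v = {0} := by
  ext
  simp [zonotope]

lemma zonotope_comp_linearMap {k : ℕ} (g : (Fin n → ℝ) →ₗ[ℝ] (Fin k → ℝ))
    (v : Fin m → Fin n → ℝ) : zonotope (fun i => g (v i)) = g '' zonotope v := by
  rw [zonotope_eq_image, zonotope_eq_image, Set.image_image]
  congr 1 with l
  simp [Fintype.linearCombination_apply, map_sum]

lemma zonotope_snoc (u : Fin m → Fin n → ℝ) (a : Fin n → ℝ) :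
    zonotope (Fin.snoc u a) = zonotope u + segment ℝ 0 a := by
  ext x
  simp only [zonotope, segment_eq_image', Set.mem_add, Set.mem_ofPred_eq, Set.mem_image,
    Fin.forall_fin_succ', Fin.sum_univ_castSucc, Fin.snoc_castSucc, Fin.snoc_last]
  constructor
  · rintro ⟨l, hl, rfl⟩
    exact ⟨_, ⟨Fin.init l, hl.1, rfl⟩, _, ⟨l (Fin.last m), hl.2, rfl⟩, by simp [Fin.init]⟩
  · rintro ⟨_, ⟨l, hl, rfl⟩, _, ⟨t, ht, rfl⟩, rfl⟩
    exact ⟨Fin.snoc l t, ⟨by simpa using hl, by simpa using ht⟩, by simp⟩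

lemma zonotope_snoc_zero (u : Fin m → Fin n → ℝ) : zonotope (Fin.snoc u 0) = zonotope u := by
  simp [zonotope_snoc]

lemma volume_zonotope_comp_linearMap (g : (Fin n → ℝ) →ₗ[ℝ] (Fin n → ℝ))
    (v : Fin m → Fin n → ℝ) :
    volume (zonotope fun i => g (v i)) =
      ENNReal.ofReal |LinearMap.det g| * volume (zonotope v) := by
  rw [zonotope_comp_linearMap, Measure.addHaar_image_linearMap]

lemma volume_zonotope_snoc_single_last {k : ℕ} (u : Fin m → Fin (k + 1) → ℝ) :
    volume (zonotope (Fin.snoc u (Pi.single (Fin.last k) 1))) =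
      volume (zonotope u) + volume (zonotope fun i => Fin.init (u i)) := by
  rw [zonotope_snoc, volume_add_segment_single_last (isCompact_zonotope u) (convex_zonotope u)]
  congr 2
  exact (zonotope_comp_linearMap (LinearMap.funLeft ℝ ℝ Fin.castSucc) u).symm

lemma absDetCols_eq_abs_det_rows (v : Fin m → Fin n → ℝ) (S : Finset (Fin m)) (h : S.card = n) :
    absDetCols v S h = |(Matrix.of fun i => v (S.orderEmbOfFin h i)).det| := by
  rw [absDetCols, ← Matrix.det_transpose]
  rfl

lemma absDetCols_comp_linearMap (g : (Fin n → ℝ) →ₗ[ℝ] (Fin n → ℝ)) (v : Fin m → Fin n → ℝ)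
    (S : Finset (Fin m)) (h : S.card = n) :
    absDetCols (fun i => g (v i)) S h = |LinearMap.det g| * absDetCols v S h := by
  rw [absDetCols_eq_abs_det_rows, absDetCols_eq_abs_det_rows, Matrix.of_comp_linearMap,
    Matrix.det_mul, Matrix.det_transpose, LinearMap.det_toMatrix', abs_mul, mul_comm]

lemma absDetCols_eq_zero_of_mem {v : Fin m → Fin n → ℝ} {S : Finset (Fin m)} (h : S.card = n)
    {i : Fin m} (hi : i ∈ S) (hv : v i = 0) : absDetCols v S h = 0 := by
  obtain ⟨c, rfl⟩ : i ∈ Set.range (S.orderEmbOfFin h) := by rwa [range_orderEmbOfFin]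
  rw [absDetCols_eq_abs_det_rows, abs_eq_zero]
  exact Matrix.det_eq_zero_of_row_eq_zero c fun j => by simp [hv]

lemma absDetCols_snoc_map_castSucc (u : Fin m → Fin n → ℝ) (a : Fin n → ℝ) (S : Finset (Fin m))
    (h : (S.map Fin.castSuccEmb).card = n) :
    absDetCols (Fin.snoc u a) (S.map Fin.castSuccEmb) h = absDetCols u S (by simpa using h) := by
  simp only [absDetCols_eq_abs_det_rows]
  congr 3 with i
  simp [orderEmbOfFin_map (f := Fin.castSuccEmb) Fin.strictMono_castSucc]

lemma absDetCols_snoc_single_last_insert_last {k : ℕ} (u : Fin m → Fin (k + 1) → ℝ)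
    (S : Finset (Fin m)) (h : (insert (Fin.last m) (S.map Fin.castSuccEmb)).card = k + 1)
    (h' : S.card = k) :
    absDetCols (Fin.snoc u (Pi.single (Fin.last k) 1))
        (insert (Fin.last m) (S.map Fin.castSuccEmb)) h =
      absDetCols (fun i => Fin.init (u i)) S h' := by
  have hlt : ∀ b ∈ S.map Fin.castSuccEmb, b < Fin.last m := by simp [Fin.castSucc_lt_last]
  rw [absDetCols_eq_abs_det_rows, absDetCols_eq_abs_det_rows,
    orderEmbOfFin_insert_of_forall_lt hlt h (by simpa using h'),
    ← Matrix.det_of_snoc_single_last]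
  congr 3 with i
  induction i using Fin.lastCases <;>
    simp [orderEmbOfFin_map (f := Fin.castSuccEmb) Fin.strictMono_castSucc]

noncomputable def absDetCols' (v : Fin m → Fin n → ℝ) (S : Finset (Fin m)) : ℝ :=
  if h : S.card = n then absDetCols v S h else 0

noncomputable def sumAbsDetCols (v : Fin m → Fin n → ℝ) : ℝ≥0∞ :=
  ∑ S, ENNReal.ofReal (absDetCols' v S)

lemma absDetCols'_snoc_map_castSucc (u : Fin m → Fin n → ℝ) (a : Fin n → ℝ)
    (S : Finset (Fin m)) :
    absDetCols' (Fin.snoc u a) (S.map Fin.castSuccEmb) = absDetCols' u S := by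
  simp only [absDetCols', card_map]
  split_ifs <;> simp [absDetCols_snoc_map_castSucc]

lemma absDetCols'_snoc_zero_insert_last (u : Fin m → Fin n → ℝ) (S : Finset (Fin m)) :
    absDetCols' (Fin.snoc u 0) (insert (Fin.last m) (S.map Fin.castSuccEmb)) = 0 := by
  rw [absDetCols']
  split_ifs with h
  · exact absDetCols_eq_zero_of_mem h (mem_insert_self _ _) (Fin.snoc_last _ _)
  · rfl

lemma absDetCols'_snoc_single_last_insert_last {k : ℕ} (u : Fin m → Fin (k + 1) → ℝ)
    (S : Finset (Fin m)) :
    absDetCols' (Fin.snoc u (Pi.single (Fin.last k) 1))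
        (insert (Fin.last m) (S.map Fin.castSuccEmb)) =
      absDetCols' (fun i => Fin.init (u i)) S := by
  have hcard : (insert (Fin.last m) (S.map Fin.castSuccEmb)).card = S.card + 1 := by
    rw [card_insert_of_notMem (by simp [Fin.castSucc_ne_last]), card_map]
  simp only [absDetCols', hcard, Nat.add_right_cancel_iff]
  split_ifs with h
  · exact absDetCols_snoc_single_last_insert_last u S _ h
  · rfl

lemma sumAbsDetCols_fin_zero (v : Fin 0 → Fin n → ℝ) :
    sumAbsDetCols v = ENNReal.ofReal (absDetCols' v ∅) := by
  simp only [sumAbsDetCols, univ_unique, sum_singleton]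
  rfl

lemma sumAbsDetCols_comp_linearMap (g : (Fin n → ℝ) →ₗ[ℝ] (Fin n → ℝ))
    (v : Fin m → Fin n → ℝ) :
    sumAbsDetCols (fun i => g (v i)) = ENNReal.ofReal |LinearMap.det g| * sumAbsDetCols v := by
  rw [sumAbsDetCols, sumAbsDetCols, mul_sum]
  refine sum_congr rfl fun S _ => ?_
  rw [← ENNReal.ofReal_mul (abs_nonneg _), absDetCols', absDetCols']
  split_ifs with h
  · rw [absDetCols_comp_linearMap]
  · simp

lemma sumAbsDetCols_snoc_zero (u : Fin m → Fin n → ℝ) :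
    sumAbsDetCols (Fin.snoc u 0) = sumAbsDetCols u := by
  simp [sumAbsDetCols, Fin.sum_finset_succ, absDetCols'_snoc_map_castSucc,
    absDetCols'_snoc_zero_insert_last]

lemma sumAbsDetCols_snoc_single_last {k : ℕ} (u : Fin m → Fin (k + 1) → ℝ) :
    sumAbsDetCols (Fin.snoc u (Pi.single (Fin.last k) 1)) =
      sumAbsDetCols u + sumAbsDetCols (fun i => Fin.init (u i)) := by
  simp [sumAbsDetCols, Fin.sum_finset_succ, absDetCols'_snoc_map_castSucc,
    absDetCols'_snoc_single_last_insert_last]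

end Zonotope

lemma volume_zonotope_eq_sumAbsDetCols : ∀ {m n : ℕ} (v : Fin m → Fin n → ℝ),
    volume (zonotope v) = sumAbsDetCols v
  | 0, 0, v => by
    rw [zonotope_fin_zero, sumAbsDetCols_fin_zero,
      Subsingleton.eq_univ_of_nonempty (Set.singleton_nonempty 0), volume_pi, Measure.pi_univ]
    simp [absDetCols', absDetCols]
  | 0, _ + 1, v => by
    rw [zonotope_fin_zero, sumAbsDetCols_fin_zero]
    simp [absDetCols']
  | m + 1, n, v => by
    by_cases hlast : v (Fin.last m) = 0
    · rw [← Fin.snoc_init_self v, hlast, zonotope_snoc_zero, sumAbsDetCols_snoc_zero,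
        volume_zonotope_eq_sumAbsDetCols]
    obtain ⟨k, rfl⟩ : ∃ k, n = k + 1 :=
      Nat.exists_eq_succ_of_ne_zero fun hn => hlast (by subst hn; exact Subsingleton.elim _ _)
    obtain ⟨g, hg⟩ := SeparatingDual.exists_continuousLinearEquiv_apply_eq (R := ℝ) hlast
      (Pi.single_ne_zero_iff.mpr one_ne_zero : Pi.single (Fin.last k) (1 : ℝ) ≠ 0)
    let w := fun i => g (v i)
    have hv : v = fun i => g.symm.toLinearEquiv.toLinearMap (w i) := by simp [w]
    have hw : w = Fin.snoc (Fin.init w) (Pi.single (Fin.last k) 1) := by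
      rw [← hg, Fin.snoc_init_self]
    rw [hv, volume_zonotope_comp_linearMap, sumAbsDetCols_comp_linearMap, hw,
      volume_zonotope_snoc_single_last, sumAbsDetCols_snoc_single_last,
      volume_zonotope_eq_sumAbsDetCols, volume_zonotope_eq_sumAbsDetCols]

theorem volume_zonotope_general {n m : ℕ} (v : Fin m → (Fin n → ℝ)) :
    volume (zonotope v) =
      ∑ S ∈ (Finset.univ.powersetCard n).attach,
        ENNReal.ofReal
          (absDetCols v S.1 (Finset.mem_powersetCard.mp S.2).2) := by
  rw [volume_zonotope_eq_sumAbsDetCols, sumAbsDetCols,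
    ← sum_subset (subset_univ (univ.powersetCard n)) fun S _ hS => ?_, ← sum_attach]
  · exact sum_congr rfl fun S _ => by rw [absDetCols', dif_pos]
  · rw [mem_powersetCard_univ] at hS
    rw [absDetCols', dif_neg hS, ENNReal.ofReal_zero]

theorem volume_zonotope {n m : ℕ} (hm : n ≤ m) (v : Fin m → (Fin n → ℝ)) :
    volume (zonotope v) =
      ∑ S ∈ (Finset.univ.powersetCard n).attach,
        ENNReal.ofReal
          (absDetCols v S.1 (Finset.mem_powersetCard.mp S.2).2) :=
  volume_zonotope_general v
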